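/- Let n ≥ 1. The convex hull in ℝ^n of the set of shell distributions {n_S(g) : g a simple graph on n vertices} equals the n-dilated standard simplex n·Δ_{n-1} = {x ∈ ℝ^n : x_j ≥ 0 for all j, and Σ_{j=0}^{n-1} x_j = n}, i.e., the convex hull of the points n·e_0, n·e_1, …, n·e_{n-1}, where e_j are the standard unit vectors of ℝ^n. -/

import Mathlib

/-- `MinDegGE G k S`: the subgraph of `G` induced on the vertex set `S` has minimum
degree at least `k`, i.e. every vertex of `S` has at least `k` neighbors inside `S`. -/
def MinDegGE {V : Type*} (G : SimpleGraph V) (k : ℕ) (S : Set V) : Prop :=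
  ∀ v ∈ S, k ≤ Nat.card {w : V // G.Adj v w ∧ w ∈ S}

/-- The vertex set of the `k`-core of `G`: the union of all vertex subsets inducing a
subgraph of minimum degree at least `k`. -/
def coreVerts {V : Type*} (G : SimpleGraph V) (k : ℕ) : Set V :=
  {v | ∃ S : Set V, MinDegGE G k S ∧ v ∈ S}

/-- The shell index of `v`: the largest `k` such that `v` belongs to the `k`-core. -/
noncomputable def shellIndex {V : Type*} (G : SimpleGraph V) (v : V) : ℕ :=
  sSup {k : ℕ | v ∈ coreVerts G k}

/-- `n_j(g)`: the number of vertices of `G` with shell index `j`. -/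
noncomputable def shellCount {V : Type*} (G : SimpleGraph V) (j : ℕ) : ℕ :=
  Nat.card {v : V // shellIndex G v = j}

/-! Every shell index on `n` vertices is below `n`, so each shell distribution is a nonnegative
vector with sum `n`, i.e. lies in the convex set `n • Δ`. Conversely, every vertex `n • eⱼ` of
`n • Δ` is a shell distribution: in the complete split graph with clique `{0, …, j - 1}` each vertex
outside the clique has degree exactly `j` and each clique vertex degree `n - 1 ≥ j`, so the whole
graph is its own `j`-core, while the `(j + 1)`-core would have to live inside the `j`-clique. -/

open Finset Pointwise

section Simplex

variable {R ι : Type*} [Field R] [LinearOrder R] [IsStrictOrderedRing R] [Fintype ι]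

lemma smul_stdSimplex {c : R} (hc : 0 < c) :
    c • stdSimplex R ι = {x | (∀ j, 0 ≤ x j) ∧ ∑ j, x j = c} := by
  ext x
  rw [Set.mem_smul_set_iff_inv_smul_mem₀ hc.ne']
  change (∀ j, 0 ≤ c⁻¹ * x j) ∧ ∑ j, c⁻¹ * x j = 1 ↔ (∀ j, 0 ≤ x j) ∧ ∑ j, x j = c
  simp only [mul_nonneg_iff_of_pos_left (inv_pos.2 hc), ← mul_sum, inv_mul_eq_one₀ hc.ne',
    eq_comm (a := c)]

lemma convexHull_range_smul_single [DecidableEq ι] {c : R} (hc : 0 < c) :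
    convexHull R (Set.range fun i : ι => c • (Pi.single i 1 : ι → R)) =
      {x | (∀ j, 0 ≤ x j) ∧ ∑ j, x j = c} := by
  rw [Set.range_smul, convexHull_smul, convexHull_rangle_single_eq_stdSimplex, smul_stdSimplex hc]

end Simplex

variable {V : Type*} {G : SimpleGraph V} {k : ℕ} {S : Set V} {v : V}

lemma minDegGE_iff_le_ncard :
    MinDegGE G k S ↔ ∀ v ∈ S, k ≤ (G.neighborSet v ∩ S).ncard :=
  forall₂_congr fun _ _ => by rw [← Nat.card_coe_set_eq]; rfl

lemma MinDegGE.mono {l : ℕ} (hS : MinDegGE G k S) (hlk : l ≤ k) : MinDegGE G l S :=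
  fun v hv => hlk.trans (hS v hv)

lemma MinDegGE.add_one_le_ncard [Finite V] (hS : MinDegGE G k S) (hv : v ∈ S) :
    k + 1 ≤ S.ncard := by
  have hdeg := minDegGE_iff_le_ncard.1 hS v hv
  have hsub : G.neighborSet v ∩ S ⊆ S \ {v} := fun w ⟨hvw, hw⟩ => ⟨hw, hvw.ne.symm⟩
  have := Set.ncard_le_ncard hsub
  have := Set.ncard_sdiff_singleton_add_one hv
  omega

lemma mem_coreVerts_zero (G : SimpleGraph V) (v : V) : v ∈ coreVerts G 0 :=
  ⟨Set.univ, fun _ _ => Nat.zero_le _, Set.mem_univ v⟩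

lemma coreVerts_anti (G : SimpleGraph V) : Antitone (coreVerts G) :=
  fun _ _ hlk _ ⟨S, hS, hv⟩ => ⟨S, hS.mono hlk, hv⟩

lemma add_one_le_card_of_mem_coreVerts [Finite V] (h : v ∈ coreVerts G k) :
    k + 1 ≤ Nat.card V := by
  obtain ⟨S, hS, hv⟩ := h
  exact (hS.add_one_le_ncard hv).trans (Set.ncard_le_card S)

lemma shellIndex_lt_card [Finite V] (G : SimpleGraph V) (v : V) :
    shellIndex G v < Nat.card V :=
  add_one_le_card_of_mem_coreVerts <| Nat.sSup_mem ⟨0, mem_coreVerts_zero G v⟩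
    ⟨Nat.card V, fun _ hk => (Nat.le_succ _).trans (add_one_le_card_of_mem_coreVerts hk)⟩

lemma shellIndex_eq_of_mem_coreVerts (h : v ∈ coreVerts G k) (h' : v ∉ coreVerts G (k + 1)) :
    shellIndex G v = k := by
  have hbound : ∀ m ∈ {m | v ∈ coreVerts G m}, m ≤ k := fun m hm => by
    by_contra! hkm
    exact h' (coreVerts_anti G hkm hm)
  exact le_antisymm (csSup_le ⟨k, h⟩ hbound) (le_csSup ⟨k, hbound⟩ h)

lemma sum_shellCount [Fintype V] (G : SimpleGraph V) :
    ∑ j ∈ range (Fintype.card V), shellCount G j = Fintype.card V := by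
  classical
  have hmaps : ∀ v ∈ (univ : Finset V), shellIndex G v ∈ range (Fintype.card V) := fun v _ =>
    mem_range.2 (Nat.card_eq_fintype_card (α := V) ▸ shellIndex_lt_card G v)
  conv_rhs => rw [← card_univ, card_eq_sum_card_fiberwise hmaps]
  refine sum_congr rfl fun j _ => ?_
  rw [shellCount, Nat.card_eq_fintype_card, Fintype.card_subtype]

lemma shellCount_of_forall_shellIndex_eq [Fintype V] (h : ∀ v, shellIndex G v = k) (j : ℕ) :
    shellCount G j = if j = k then Fintype.card V else 0 := by
  simp only [shellCount, h]
  split_ifs with hj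
  · simp [hj]
  · simp [Ne.symm hj]

/-- The clique `K` joined to the independent set `Kᶜ`. -/
def completeSplitGraph (K : Set V) : SimpleGraph V :=
  SimpleGraph.fromRel fun v _ => v ∈ K

section CompleteSplitGraph

variable {K : Finset V}

lemma neighborSet_completeSplitGraph_of_notMem (hv : v ∉ K) :
    (completeSplitGraph (K : Set V)).neighborSet v ⊆ K := by
  rintro w ⟨-, hvw | hwv⟩
  exacts [absurd hvw hv, hwv]

lemma minDegGE_completeSplitGraph_univ [Finite V] {u : V} (hu : u ∉ K) :
    MinDegGE (completeSplitGraph (K : Set V)) #K Set.univ := by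
  classical
  refine minDegGE_iff_le_ncard.2 fun v _ => ?_
  rw [Set.inter_univ]
  by_cases hv : v ∈ K
  · have hsub : ((insert u (K.erase v) : Finset V) : Set V) ⊆
        (completeSplitGraph (K : Set V)).neighborSet v := by
      intro w hw
      simp only [coe_insert, coe_erase, Set.mem_insert_iff, Set.mem_sdiff, mem_coe,
        Set.mem_singleton_iff] at hw
      rcases hw with rfl | ⟨hwK, hwv⟩
      · exact ⟨fun h => hu (h ▸ hv), Or.inl hv⟩
      · exact ⟨Ne.symm hwv, Or.inl hv⟩
    have := Set.ncard_le_ncard hsub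
    rwa [Set.ncard_coe_finset, card_insert_of_notMem (fun h => hu (mem_of_mem_erase h)),
      card_erase_add_one hv] at this
  · have hsub : (K : Set V) ⊆ (completeSplitGraph (K : Set V)).neighborSet v :=
      fun w hw => ⟨fun h => hv (h ▸ hw), Or.inr hw⟩
    simpa using Set.ncard_le_ncard hsub

lemma coreVerts_completeSplitGraph_card_add_one [Finite V] :
    coreVerts (completeSplitGraph (K : Set V)) (#K + 1) = ∅ := by
  refine Set.eq_empty_of_forall_notMem fun v ⟨S, hS, hv⟩ => ?_
  -- A vertex outside `K` has only `#K` neighbours, so `S ⊆ K`, too small for degree `#K + 1`.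
  have hSK : S ⊆ K := by
    intro w hw
    by_contra hwK
    have hdeg := minDegGE_iff_le_ncard.1 hS w hw
    have := Set.ncard_le_ncard
      ((Set.inter_subset_left (t := S)).trans (neighborSet_completeSplitGraph_of_notMem hwK))
    simp only [Set.ncard_coe_finset] at this
    omega
  have := hS.add_one_le_ncard hv
  have := Set.ncard_le_ncard hSK
  simp only [Set.ncard_coe_finset] at this
  omega

lemma shellIndex_completeSplitGraph [Finite V] {u : V} (hu : u ∉ K) (v : V) :
    shellIndex (completeSplitGraph (K : Set V)) v = #K := by
  refine shellIndex_eq_of_mem_coreVerts ⟨Set.univ, minDegGE_completeSplitGraph_univ hu, trivial⟩ ?_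
  rw [coreVerts_completeSplitGraph_card_add_one]
  exact Set.notMem_empty v

end CompleteSplitGraph

/-- For `n ≥ 1`, the convex hull in `ℝⁿ` of the set of shell
distributions of simple graphs on `n` vertices equals the `n`-dilated standard simplex
`{x : xⱼ ≥ 0, Σ xⱼ = n}`, which is the convex hull of the points `n·e₀, …, n·e_{n-1}`. -/
theorem convexHull_shell_distributions_eq_dilated_simplex {n : ℕ} (hn : 1 ≤ n) :
    convexHull ℝ {x : Fin n → ℝ |
        ∃ G : SimpleGraph (Fin n), x = fun j : Fin n => (shellCount G (j : ℕ) : ℝ)} =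
      {x : Fin n → ℝ | (∀ j, 0 ≤ x j) ∧ ∑ j, x j = (n : ℝ)} ∧
    convexHull ℝ (Set.range fun i : Fin n =>
        (n : ℝ) • (Pi.single i (1 : ℝ) : Fin n → ℝ)) =
      {x : Fin n → ℝ | (∀ j, 0 ≤ x j) ∧ ∑ j, x j = (n : ℝ)} := by
  have hsimplex := convexHull_range_smul_single (ι := Fin n) (c := (n : ℝ)) (by exact_mod_cast hn)
  refine ⟨le_antisymm ?_ ?_, hsimplex⟩
  · refine convexHull_min ?_ (hsimplex ▸ convex_convexHull ℝ _)
    rintro _ ⟨G, rfl⟩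
    refine ⟨fun j => Nat.cast_nonneg _, ?_⟩
    have := sum_shellCount G
    rw [Fintype.card_fin, ← Fin.sum_univ_eq_sum_range] at this
    beta_reduce
    exact_mod_cast this
  · rw [← hsimplex]
    refine convexHull_mono ?_
    rintro _ ⟨j, rfl⟩
    refine ⟨completeSplitGraph (Iio j : Finset (Fin n)), funext fun i => ?_⟩
    rw [shellCount_of_forall_shellIndex_eq
      (shellIndex_completeSplitGraph (u := j) (by simp)), Fin.card_Iio, Fintype.card_fin]
    simp [Pi.single_apply, Fin.val_inj]
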